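/- arXiv:2604.04896 — 4 statements merged into one kernel-verified Lean document; each statement's English description precedes it below -/
import Mathlib

section
/- For any matroid M and any collection of k ≥ 1 pairwise disjoint subsets X₁,…,X_k of E(M), if M' is obtained from M by a c*-transformation (i.e., there is a matroid M⁺ with an element e such that M = M⁺ \ e and M' = M⁺ / e) with M' ≠ M, then ω_M(X₁,…,X_k) ≤ ω_{M'}(X₁,…,X_k) + 1, where ω_M(X₁,…,X_k) = Σ_{i=1}^k rk_M(E(M) − X_i) − (k−1)·rk(M). -/
open Set

namespace MatroidDepth

variable {α : Type*}

/-- The (finite) rank of a set in a matroid. -/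
noncomputable def rk (M : Matroid α) (X : Set α) : ℕ :=
  sSup {n | ∃ I, M.Indep I ∧ I ⊆ X ∧ I.ncard = n}

/-- The rank of a matroid. -/
noncomputable def rank (M : Matroid α) : ℕ := rk M M.E

/-- Deletion of a set of elements. -/
def del (M : Matroid α) (D : Set α) : Matroid α := M.restrict (M.E \ D)

/-- Contraction of a set of elements, as the dual of deletion. -/
def con (M : Matroid α) (C : Set α) : Matroid α := (del M.dual C).dual

/-- The connectivity function `λ_M`. -/
noncomputable def lam (M : Matroid α) (X : Set α) : ℤ :=
  (rk M X : ℤ) + (rk M (M.E \ X) : ℤ) - (rank M : ℤ)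

/-- A circuit: a minimal dependent set. -/
def Circuit (M : Matroid α) (C : Set α) : Prop :=
  C ⊆ M.E ∧ ¬ M.Indep C ∧ ∀ D, D ⊂ C → M.Indep D

/-- Two elements connected: equal, or on a common circuit. -/
def ConnTo (M : Matroid α) (e f : α) : Prop :=
  (e = f ∧ e ∈ M.E) ∨ ∃ C, Circuit M C ∧ e ∈ C ∧ f ∈ C

/-- A matroid is connected. -/
def Conn (M : Matroid α) : Prop :=
  M.E.Nonempty ∧ ∀ e ∈ M.E, ∀ f ∈ M.E, ConnTo M e f

/-- `A` is (the ground set of) a component of `M`: a maximal mutually-connected set. -/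
def IsComponent (M : Matroid α) (A : Set α) : Prop :=
  A ⊆ M.E ∧ A.Nonempty ∧ (∀ e ∈ A, ∀ f ∈ A, ConnTo M e f) ∧
    ∀ B, A ⊆ B → B ⊆ M.E → (∀ e ∈ B, ∀ f ∈ B, ConnTo M e f) → B ⊆ A

/-- A loop. -/
def IsLoop (M : Matroid α) (e : α) : Prop := e ∈ M.E ∧ ¬ M.Indep {e}

/-- A coloop: an element in every base. -/
def IsColoop (M : Matroid α) (e : α) : Prop := e ∈ M.E ∧ ∀ B, M.IsBase B → e ∈ B

/-- Generic recursive depth: `DepthLE step M n` says the `step`-depth of `M` is at most `n`. -/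
inductive DepthLE {α : Type*} (step : Matroid α → Matroid α → Prop) : Matroid α → ℕ → Prop
  | base (M : Matroid α) (n : ℕ) : M.E.Subsingleton → 1 ≤ n → DepthLE step M n
  | comps (M : Matroid α) (n : ℕ) : ¬ Conn M → ¬ M.E.Subsingleton →
      (∀ A, IsComponent M A → DepthLE step (M.restrict A) n) → DepthLE step M n
  | step (M M' : Matroid α) (n : ℕ) : Conn M → ¬ M.E.Subsingleton →
      step M M' → M' ≠ M → DepthLE step M' n → DepthLE step M (n + 1)

/-- The depth associated with a transformation relation `step`. -/
noncomputable def depth (step : Matroid α → Matroid α → Prop) (M : Matroid α) : ℕ :=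
  sInf {n | DepthLE step M n}

/-- c-transformation: contraction of one element. -/
def cStep (M M' : Matroid α) : Prop := ∃ e ∈ M.E, M' = con M {e}

/-- d-transformation: deletion of one element. -/
def dStep (M M' : Matroid α) : Prop := ∃ e ∈ M.E, M' = del M {e}

/-- cd-transformation. -/
def cdStep (M M' : Matroid α) : Prop := cStep M M' ∨ dStep M M'

/-- c*-transformation: extend by an element and contract it. -/
def csStep (M M' : Matroid α) : Prop :=
  ∃ (N : Matroid α) (f : α), M = del N {f} ∧ M' = con N {f}

/-- Contraction-depth. -/
noncomputable def cd (M : Matroid α) : ℕ := depth cStep M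

/-- Deletion-depth. -/
noncomputable def dd (M : Matroid α) : ℕ := depth dStep M

/-- Contraction-deletion-depth. -/
noncomputable def cdd (M : Matroid α) : ℕ := depth cdStep M

/-- c*-depth. -/
noncomputable def csd (M : Matroid α) : ℕ := depth csStep M

/-- The function ω from the paper. -/
noncomputable def omega (M : Matroid α) {k : ℕ} (X : Fin k → Set α) : ℤ :=
  (∑ i, (rk M (M.E \ X i) : ℤ)) - ((k : ℤ) - 1) * (rank M : ℤ)


section Aux

variable {M : Matroid α} {X Y I J B : Set α} {e : α}

lemma rk_bddAbove (M : Matroid α) [M.Finite] (X : Set α) :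
    BddAbove {n | ∃ I, M.Indep I ∧ I ⊆ X ∧ I.ncard = n} := by
  refine ⟨M.E.ncard, ?_⟩
  rintro n ⟨J, hJ, -, rfl⟩
  exact Set.ncard_le_ncard hJ.subset_ground M.ground_finite

lemma le_rk [M.Finite] (hI : M.Indep I) (hIX : I ⊆ X) : I.ncard ≤ rk M X :=
  le_csSup (rk_bddAbove M X) ⟨I, hI, hIX, rfl⟩

lemma rk_eq_ncard [M.Finite] (hI : M.IsBasis' I X) : rk M X = I.ncard := by
  refine le_antisymm (csSup_le ⟨I.ncard, I, hI.indep, hI.subset, rfl⟩ ?_)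
    (le_rk hI.indep hI.subset)
  rintro n ⟨J, hJ, hJX, rfl⟩
  by_contra hlt
  push_neg at hlt
  have hIfin : I.Finite := M.set_finite I hI.indep.subset_ground
  have hJfin : J.Finite := M.set_finite J hJ.subset_ground
  have hcard : I.encard < J.encard := by
    rw [← hIfin.cast_ncard_eq, ← hJfin.cast_ncard_eq]
    exact_mod_cast hlt
  obtain ⟨x, hx, hins⟩ := hI.indep.augment hJ hcard
  exact hI.insert_not_indep ⟨hJX hx.1, hx.2⟩ hins

lemma rk_mono [M.Finite] (h : X ⊆ Y) : rk M X ≤ rk M Y := by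
  obtain ⟨I, hI⟩ := M.exists_isBasis' X
  rw [rk_eq_ncard hI]
  exact le_rk hI.indep (hI.subset.trans h)

lemma rk_inter_ground (M : Matroid α) (X : Set α) : rk M X = rk M (X ∩ M.E) := by
  unfold rk
  congr 1
  ext n
  constructor <;> rintro ⟨I, h1, h2, rfl⟩
  exacts [⟨I, h1, Set.subset_inter h2 h1.subset_ground, rfl⟩,
    ⟨I, h1, h2.trans Set.inter_subset_left, rfl⟩]

lemma rk_union_le [M.Finite] (X Y : Set α) : rk M (X ∪ Y) ≤ rk M X + rk M Y := by
  obtain ⟨I, hI⟩ := M.exists_isBasis' (X ∪ Y)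
  rw [rk_eq_ncard hI]
  have hIfin : I.Finite := M.set_finite I hI.indep.subset_ground
  have h1 : (I ∩ X).ncard ≤ rk M X :=
    le_rk (hI.indep.subset Set.inter_subset_left) Set.inter_subset_right
  have h2 : (I \ X).ncard ≤ rk M Y :=
    le_rk (hI.indep.subset Set.diff_subset)
      (fun x hx => (hI.subset hx.1).resolve_left hx.2)
  have h3 := Set.ncard_diff_add_ncard_of_subset (Set.inter_subset_left (s := I) (t := X)) hIfin
  rw [Set.diff_self_inter] at h3
  omega

lemma rk_le_ncard [M.Finite] (hX : X.Finite) : rk M X ≤ X.ncard := by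
  obtain ⟨I, hI⟩ := M.exists_isBasis' X
  rw [rk_eq_ncard hI]
  exact Set.ncard_le_ncard hI.subset hX

lemma indep_iff_rk [M.Finite] (hIE : I ⊆ M.E) : M.Indep I ↔ rk M I = I.ncard := by
  have hfin : I.Finite := M.set_finite I hIE
  constructor
  · intro h
    exact le_antisymm (rk_le_ncard hfin) (le_rk h subset_rfl)
  · intro h
    obtain ⟨J, hJ⟩ := M.exists_isBasis' I
    have hJI : J = I := Set.eq_of_subset_of_ncard_le hJ.subset
      (by rw [← h, rk_eq_ncard hJ]) hfin
    exact hJI ▸ hJ.indep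

lemma rank_eq_ncard_base [M.Finite] (hB : M.IsBase B) : rank M = B.ncard :=
  rk_eq_ncard hB.isBasis_ground.isBasis'

lemma rk_restrict (M : Matroid α) (R X : Set α) : rk (M.restrict R) X = rk M (X ∩ R) := by
  unfold rk
  congr 1
  ext n
  constructor <;> rintro ⟨I, hI, hsub, rfl⟩
  · rw [Matroid.restrict_indep_iff] at hI
    exact ⟨I, hI.1, Set.subset_inter hsub hI.2, rfl⟩
  · exact ⟨I, Matroid.restrict_indep_iff.2 ⟨hI, hsub.trans Set.inter_subset_right⟩,
      hsub.trans Set.inter_subset_left, rfl⟩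

lemma rk_dual_add [M.Finite] (hX : X ⊆ M.E) :
    rk M✶ X + rank M = X.ncard + rk M (M.E \ X) := by
  have hXfin : X.Finite := M.set_finite X hX
  -- lower bound
  obtain ⟨J, hJ⟩ := M.exists_isBasis (M.E \ X) Set.diff_subset
  obtain ⟨B, hB, hJB⟩ := hJ.indep.exists_isBase_superset
  have hBfin : B.Finite := M.set_finite B hB.subset_ground
  have hJBX : J = B \ X := hJ.eq_of_subset_indep (hB.indep.subset Set.diff_subset)
    (fun x hx => ⟨hJB hx, (hJ.subset hx).2⟩)
    (Set.diff_subset_diff_left hB.subset_ground)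
  have hdiXB : (X \ B).ncard ≤ rk M✶ X :=
    le_rk (M := M✶) (Matroid.dual_indep_iff_exists'.2
      ⟨Set.diff_subset.trans hX, B, hB, disjoint_sdiff_left⟩) Set.diff_subset
  have hrkEX : rk M (M.E \ X) = (B \ X).ncard := by rw [rk_eq_ncard hJ.isBasis', hJBX]
  have hrankB : rank M = B.ncard := rank_eq_ncard_base hB
  have hc1 : (X \ B).ncard + (X ∩ B).ncard = X.ncard := by
    have := Set.ncard_diff_add_ncard_of_subset (Set.inter_subset_left (s := X) (t := B)) hXfin
    rwa [Set.diff_self_inter] at this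
  have hc2 : (B \ X).ncard + (B ∩ X).ncard = B.ncard := by
    have := Set.ncard_diff_add_ncard_of_subset (Set.inter_subset_left (s := B) (t := X)) hBfin
    rwa [Set.diff_self_inter] at this
  have hc3 : (X ∩ B).ncard = (B ∩ X).ncard := by rw [Set.inter_comm]
  -- upper bound
  obtain ⟨I, hI⟩ := (M✶).exists_isBasis' X
  have hrkd : rk M✶ X = I.ncard := rk_eq_ncard hI
  obtain ⟨hIE, B', hB', hdisj⟩ := Matroid.dual_indep_iff_exists'.1 hI.indep
  have hB'fin : B'.Finite := M.set_finite B' hB'.subset_ground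
  have hIXB' : I.ncard ≤ (X \ B').ncard :=
    Set.ncard_le_ncard (fun x hx => ⟨hI.subset hx, (hdisj.subset_compl_right) hx⟩)
      (hXfin.diff : (X \ B').Finite)
  have hB'X : (B' \ X).ncard ≤ rk M (M.E \ X) :=
    le_rk (hB'.indep.subset Set.diff_subset) (Set.diff_subset_diff_left hB'.subset_ground)
  have hrankB' : rank M = B'.ncard := rank_eq_ncard_base hB'
  have hc4 : (X \ B').ncard + (X ∩ B').ncard = X.ncard := by
    have := Set.ncard_diff_add_ncard_of_subset (Set.inter_subset_left (s := X) (t := B')) hXfin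
    rwa [Set.diff_self_inter] at this
  have hc5 : (B' \ X).ncard + (B' ∩ X).ncard = B'.ncard := by
    have := Set.ncard_diff_add_ncard_of_subset (Set.inter_subset_left (s := B') (t := X)) hB'fin
    rwa [Set.diff_self_inter] at this
  have hc6 : (X ∩ B').ncard = (B' ∩ X).ncard := by rw [Set.inter_comm]
  omega

end Aux
section Main

variable {N : Matroid α} {Y : Set α} {f : α}

lemma del_finite (N : Matroid α) [N.Finite] (C : Set α) : (del N C).Finite :=
  Matroid.restrict_finite (N.ground_finite.diff : (N.E \ C).Finite)

lemma con_finite (N : Matroid α) [N.Finite] (C : Set α) : (con N C).Finite :=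
  @Matroid.dual_finite _ _ (del_finite N✶ C)

lemma del_ground (N : Matroid α) (C : Set α) : (del N C).E = N.E \ C := rfl

lemma con_ground (N : Matroid α) (C : Set α) : (con N C).E = N.E \ C := rfl

lemma rk_con_add [N.Finite] (hY : Y ⊆ N.E \ {f}) :
    rk (con N {f}) Y + rk N {f} = rk N (insert f Y) := by
  haveI hD : (del N✶ {f}).Finite := del_finite N✶ {f}
  have hYE : Y ⊆ N.E := hY.trans Set.diff_subset
  have hfY : f ∉ Y := fun h => (hY h).2 rfl
  -- con N {f} = (del N✶ {f})✶
  have hcon : rk (con N {f}) Y = rk (del N✶ {f})✶ Y := rfl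
  have hYD : Y ⊆ (del N✶ {f}).E := hY
  have Eq1 := rk_dual_add (M := del N✶ {f}) hYD
  -- ground set of the deletion
  have hDE : (del N✶ {f}).E = N.E \ {f} := rfl
  rw [hDE] at Eq1
  -- rk of the deletion in terms of N✶ : del N✶ {f} = N✶.restrict (N✶.E \ {f})
  have hrkD : ∀ Z : Set α, Z ⊆ N.E \ {f} → rk (del N✶ {f}) Z = rk N✶ Z := by
    intro Z hZ
    have : rk (del N✶ {f}) Z = rk N✶ (Z ∩ (N✶.E \ {f})) := rk_restrict _ _ _
    rw [Matroid.dual_ground] at this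
    rwa [Set.inter_eq_self_of_subset_left hZ] at this
  have hrankD : rank (del N✶ {f}) = rk N✶ (N.E \ {f}) := by
    have : rank (del N✶ {f}) = rk (del N✶ {f}) (N.E \ {f}) := by
      rw [rank, hDE]
    rw [this, hrkD _ subset_rfl]
  rw [hrankD, hrkD _ Set.diff_subset] at Eq1
  -- two applications of the dual formula for N
  have Eq3 := rk_dual_add (M := N) (X := N.E \ {f}) Set.diff_subset
  have Eq4 := rk_dual_add (M := N) (X := (N.E \ {f}) \ Y) (Set.diff_subset.trans Set.diff_subset)
  -- set identities
  have hA : N.E \ (N.E \ {f}) = {f} ∩ N.E := by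
    ext x; simp only [Set.mem_diff, Set.mem_inter_iff, Set.mem_singleton_iff]; tauto
  have hB : N.E \ ((N.E \ {f}) \ Y) = ({f} ∩ N.E) ∪ Y := by
    ext x
    have hxe : x ∈ Y → x ∈ N.E := fun h => hYE h
    simp only [Set.mem_diff, Set.mem_union, Set.mem_inter_iff, Set.mem_singleton_iff]
    tauto
  rw [hA] at Eq3
  rw [hB] at Eq4
  -- rewrite the rk-terms involving intersections with the ground set
  have hfeq : rk N ({f} ∩ N.E) = rk N {f} := (rk_inter_ground N {f}).symm
  have hins : rk N (({f} ∩ N.E) ∪ Y) = rk N (insert f Y) := by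
    rw [rk_inter_ground N (insert f Y)]
    congr 1
    ext x
    have hxe : x ∈ Y → x ∈ N.E := fun h => hYE h
    simp only [Set.mem_union, Set.mem_inter_iff, Set.mem_singleton_iff, Set.mem_insert_iff]
    tauto
  rw [hfeq] at Eq3
  rw [hins] at Eq4
  have hcard : ((N.E \ {f}) \ Y).ncard + Y.ncard = (N.E \ {f}).ncard :=
    Set.ncard_diff_add_ncard_of_subset hY (N.ground_finite.diff : (N.E \ {f}).Finite)
  rw [hcon]
  omega

end Main
theorem stmt0 {α : Type*} (M M' Mp : Matroid α) [Mp.Finite] (e : α)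
    (hM : M = del Mp {e}) (hM' : M' = con Mp {e}) (hne : M' ≠ M)
    (k : ℕ) (hk : 1 ≤ k) (X : Fin k → Set α) (hX : ∀ i, X i ⊆ M.E)
    (hdisj : Pairwise (Function.onFun Disjoint X)) :
    omega M X ≤ omega M' X + 1 := by
  subst hM hM'
  haveI hMfin : (del Mp {e}).Finite := del_finite Mp {e}
  haveI hM'fin : (con Mp {e}).Finite := con_finite Mp {e}
  have hME : (del Mp {e}).E = Mp.E \ {e} := rfl
  have hM'E : (con Mp {e}).E = Mp.E \ {e} := rfl
  have hrkdel : ∀ Y : Set α, Y ⊆ Mp.E \ {e} → rk (del Mp {e}) Y = rk Mp Y := by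
    intro Y hY
    have h := rk_restrict Mp (Mp.E \ {e}) Y
    rwa [Set.inter_eq_self_of_subset_left hY] at h
  have hrankdel : rank (del Mp {e}) = rk Mp (Mp.E \ {e}) := by
    rw [rank, hME, hrkdel _ subset_rfl]
  have hrkcon : ∀ Y : Set α, Y ⊆ Mp.E \ {e} →
      rk (con Mp {e}) Y + rk Mp {e} = rk Mp (insert e Y) :=
    fun Y hY => rk_con_add hY
  have hsingle : rk Mp {e} ≤ 1 := by
    have h := rk_le_ncard (M := Mp) (Set.finite_singleton e)
    simpa using h
  have hrankcon : rank (con Mp {e}) + rk Mp {e} = rank Mp := by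
    have h := hrkcon (Mp.E \ {e}) subset_rfl
    have hins : rk Mp (insert e (Mp.E \ {e})) = rank Mp := by
      rw [rk_inter_ground Mp (insert e (Mp.E \ {e}))]
      rw [rank]
      congr 1
      ext x
      simp only [Set.mem_inter_iff, Set.mem_insert_iff, Set.mem_diff, Set.mem_singleton_iff]
      tauto
    rw [rank, hM'E, ← hins]
    exact h
  have hterm : ∀ Y : Set α, Y ⊆ Mp.E \ {e} →
      rk (del Mp {e}) Y ≤ rk (con Mp {e}) Y + 1 := by
    intro Y hY
    have h1 := hrkcon Y hY
    have h2 : rk Mp Y ≤ rk Mp (insert e Y) := rk_mono (Set.subset_insert e Y)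
    rw [hrkdel Y hY]
    omega
  by_cases hcase : rank (con Mp {e}) + 1 ≤ rank (del Mp {e})
  · -- the main arithmetic
    unfold omega
    rw [hME, hM'E]
    have hsum : ∀ i : Fin k, (rk (del Mp {e}) ((Mp.E \ {e}) \ X i) : ℤ) ≤
        (rk (con Mp {e}) ((Mp.E \ {e}) \ X i) : ℤ) + 1 := by
      intro i
      exact_mod_cast hterm _ Set.diff_subset
    have hS : (∑ i, (rk (del Mp {e}) ((Mp.E \ {e}) \ X i) : ℤ)) ≤
        (∑ i, (rk (con Mp {e}) ((Mp.E \ {e}) \ X i) : ℤ)) + k := by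
      calc (∑ i, (rk (del Mp {e}) ((Mp.E \ {e}) \ X i) : ℤ))
          ≤ ∑ i, ((rk (con Mp {e}) ((Mp.E \ {e}) \ X i) : ℤ) + 1) :=
            Finset.sum_le_sum (fun i _ => hsum i)
        _ = (∑ i, (rk (con Mp {e}) ((Mp.E \ {e}) \ X i) : ℤ)) + k := by
            rw [Finset.sum_add_distrib]
            simp
    have hkz : (1 : ℤ) ≤ (k : ℤ) := by exact_mod_cast hk
    have hr : ((k : ℤ) - 1) * ((rank (con Mp {e}) : ℤ) + 1) ≤
        ((k : ℤ) - 1) * (rank (del Mp {e}) : ℤ) := by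
      apply mul_le_mul_of_nonneg_left (by exact_mod_cast hcase) (by linarith)
    linarith [hS, hr]
  · exfalso
    apply hne
    push_neg at hcase
    have h1 : rank Mp ≤ rk Mp {e} + rk Mp (Mp.E \ {e}) := by
      have hsub : Mp.E ⊆ insert e (Mp.E \ {e}) := by
        intro x hx
        by_cases h : x = e
        · exact Or.inl h
        · exact Or.inr ⟨hx, h⟩
      calc rank Mp ≤ rk Mp (insert e (Mp.E \ {e})) := rk_mono hsub
        _ = rk Mp ({e} ∪ (Mp.E \ {e})) := by rw [Set.insert_eq]
        _ ≤ rk Mp {e} + rk Mp (Mp.E \ {e}) := rk_union_le _ _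
    have h2 : rk Mp (Mp.E \ {e}) ≤ rank Mp := rk_mono Set.diff_subset
    -- hcase : rank (del Mp {e}) < rank (con Mp {e}) + 1
    have hkey : ∀ Y : Set α, Y ⊆ Mp.E \ {e} →
        rk Mp (insert e Y) = rk Mp Y + rk Mp {e} := by
      intro Y hY
      have hle : rk Mp (insert e Y) ≤ rk Mp {e} + rk Mp Y := by
        rw [Set.insert_eq]
        exact rk_union_le _ _
      have hc : rk Mp {e} = 0 ∨ rk Mp {e} = 1 := by omega
      rcases hc with hc | hc
      · have := rk_mono (M := Mp) (Set.subset_insert e Y)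
        omega
      · -- e is a nonloop, and (from the rank equations) a coloop
        have hein : Mp.Indep {e} := by
          obtain ⟨J, hJ⟩ := Mp.exists_isBasis' {e}
          have hJcard : J.ncard = 1 := by rw [← rk_eq_ncard hJ, hc]
          have hJe : J = {e} := Set.eq_of_subset_of_ncard_le hJ.subset
            (by rw [hJcard, Set.ncard_singleton]) (Set.finite_singleton e)
          exact hJe ▸ hJ.indep
        have hbase : ∀ B, Mp.IsBase B → e ∈ B := by
          intro B hB
          by_contra heB
          have hBE' : B ⊆ Mp.E \ {e} :=
            fun x hx => ⟨hB.subset_ground hx, fun h => heB (h ▸ hx)⟩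
          have hB1 := le_rk hB.indep hBE'
          have hRB : rank Mp = B.ncard := rank_eq_ncard_base hB
          omega
        obtain ⟨I, hI⟩ := Mp.exists_isBasis' Y
        obtain ⟨B, hB, hIB⟩ := hI.indep.exists_isBase_superset
        have heI : e ∉ I := fun h => (hY (hI.subset h)).2 rfl
        have hIe : Mp.Indep (insert e I) :=
          hB.indep.subset (Set.insert_subset (hbase B hB) hIB)
        have hcard : (insert e I).ncard = I.ncard + 1 :=
          Set.ncard_insert_of_notMem heI (Mp.set_finite I hI.indep.subset_ground)
        have hge := le_rk hIe (Set.insert_subset_insert hI.subset)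
        have hYI := rk_eq_ncard hI
        omega
    apply Matroid.ext_indep (by rw [hME, hM'E])
    intro I hI
    rw [hM'E] at hI
    rw [indep_iff_rk (M := con Mp {e}) (by rw [hM'E]; exact hI),
      indep_iff_rk (M := del Mp {e}) (by rw [hME]; exact hI)]
    have e1 := hrkcon I hI
    have e2 := hrkdel I hI
    have e3 := hkey I hI
    omega

end MatroidDepth
end

section
/- For every n ≥ 1, the deletion-depth of the cycle matroid of the complete bipartite graph K_{3,n} is at least n. -/
open Set

namespace MatroidDepth

variable {α : Type*}

/-! ### Auxiliary lemmas -/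

section Aux

open Sum SimpleGraph

lemma depthLE_mono {step : Matroid α → Matroid α → Prop} {M : Matroid α} {m n : ℕ}
    (h : DepthLE step M m) (hmn : m ≤ n) : DepthLE step M n := by
  induction h generalizing n with
  | base M k h1 h2 => exact .base M n h1 (le_trans h2 hmn)
  | comps M k h1 h2 h3 ih => exact .comps M n h1 h2 fun A hA => ih A hA hmn
  | step M M' k h1 h2 h3 h4 h5 ih =>
      obtain ⟨n', rfl⟩ : ∃ n', n = n' + 1 := ⟨n - 1, by omega⟩
      exact .step M M' n' h1 h2 h3 h4 (ih (by omega))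

lemma exists_component [Finite α] (N : Matroid α) (S : Set α) (hSE : S ⊆ N.E)
    (hS : S.Nonempty) (hconn : ∀ e ∈ S, ∀ f ∈ S, ConnTo N e f) :
    ∃ A, IsComponent N A ∧ S ⊆ A := by
  set F : Set (Set α) := {B | S ⊆ B ∧ B ⊆ N.E ∧ ∀ e ∈ B, ∀ f ∈ B, ConnTo N e f} with hF
  obtain ⟨A, hAF, hmax⟩ := Set.Finite.exists_maximalFor id F (Set.toFinite F)
    ⟨S, le_refl S, hSE, hconn⟩
  obtain ⟨hSA, hAE, hAc⟩ := hAF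
  refine ⟨A, ⟨hAE, hS.mono hSA, hAc, ?_⟩, hSA⟩
  intro B hAB hBE hBc
  have : B ∈ F := ⟨hSA.trans hAB, hBE, hBc⟩
  exact (hmax this hAB).ge

lemma one_le_of_depthLE [Finite α] {step : Matroid α → Matroid α → Prop} {N : Matroid α} {m : ℕ}
    (h : DepthLE step N m) (hne : N.E.Nonempty) : 1 ≤ m := by
  induction h with
  | base M k h1 h2 => exact h2
  | comps M k h1 h2 h3 ih =>
      obtain ⟨e, he⟩ := hne
      obtain ⟨A, hA, hSA⟩ := exists_component M {e} (by simpa using he) ⟨e, rfl⟩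
        (by rintro x rfl y rfl; exact Or.inl ⟨rfl, he⟩)
      exact ih A hA (by rw [Matroid.restrict_ground_eq]; exact hA.2.1)
  | step M M' k => omega

/-- Upper bound: every matroid on a finite type has finite deletion-depth. -/
lemma depthLE_upper [Finite α] : ∀ (k : ℕ) (N : Matroid α), N.E.ncard ≤ k →
    DepthLE dStep N (N.E.ncard + 1) := by
  intro k
  induction k with
  | zero =>
      intro N hN
      exact .base N _ (by
        have : N.E.ncard = 0 := le_antisymm hN (Nat.zero_le _)
        rw [(Set.ncard_eq_zero (Set.toFinite _)).mp this]
        exact Set.subsingleton_empty) (by omega)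
  | succ k ih =>
      intro N hN
      by_cases hsub : N.E.Subsingleton
      · exact .base N _ hsub (by omega)
      by_cases hconn : Conn N
      · obtain ⟨e, he⟩ := hconn.1
        have hdel : (del N {e}).E = N.E \ {e} := Matroid.restrict_ground_eq
        have hne : del N {e} ≠ N := by
          intro hEq
          have : e ∈ (del N {e}).E := by rw [hEq]; exact he
          rw [hdel] at this
          exact this.2 rfl
        have hcard : (del N {e}).E.ncard + 1 = N.E.ncard := by
          rw [hdel]; exact Set.ncard_diff_singleton_add_one he
        have h1 : DepthLE dStep (del N {e}) ((del N {e}).E.ncard + 1) :=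
          ih _ (by omega)
        have := DepthLE.step N (del N {e}) _ hconn hsub ⟨e, he, rfl⟩ hne h1
        exact depthLE_mono this (by omega)
      · refine .comps N _ hconn hsub fun A hA => ?_
        have hAE : A ⊆ N.E := hA.1
        have hAne : A ≠ N.E := by
          intro hEq
          exact hconn ⟨hEq ▸ hA.2.1, hEq ▸ hA.2.2.1⟩
        have hAlt : A.ncard < N.E.ncard :=
          Set.ncard_lt_ncard ⟨hAE, fun h => hAne (le_antisymm hAE h)⟩
        have : DepthLE dStep (N.restrict A) ((N.restrict A).E.ncard + 1) :=
          ih _ (by rw [Matroid.restrict_ground_eq]; omega)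
        refine depthLE_mono this ?_
        rw [Matroid.restrict_ground_eq]; omega

variable {n : ℕ}

lemma adj_bip_isLeft {u v : Fin 3 ⊕ Fin n}
    (h : (completeBipartiteGraph (Fin 3) (Fin n)).Adj u v) : u.isLeft = !v.isLeft := by
  rcases u with a|a <;> rcases v with b|b <;> simp_all

lemma walk_parity {S : Set (Sym2 (Fin 3 ⊕ Fin n))}
    (hS : S ⊆ (completeBipartiteGraph (Fin 3) (Fin n)).edgeSet)
    {u v : Fin 3 ⊕ Fin n} (p : (fromEdgeSet S).Walk u v) :
    (u.isLeft = v.isLeft) ↔ Even p.length := by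
  induction p with
  | nil => simp
  | @cons u w v h p ih =>
      have hadj : (completeBipartiteGraph (Fin 3) (Fin n)).Adj u w := by
        rw [fromEdgeSet_adj] at h
        exact (SimpleGraph.mem_edgeSet _).mp (hS h.1)
      have hul := adj_bip_isLeft hadj
      rw [Walk.length_cons, Nat.even_add_one, ← ih, hul]
      cases w.isLeft <;> cases v.isLeft <;> simp

lemma small_acyclic {S : Set (Sym2 (Fin 3 ⊕ Fin n))}
    (hS : S ⊆ (completeBipartiteGraph (Fin 3) (Fin n)).edgeSet)
    (h3 : S.ncard ≤ 3) : (fromEdgeSet S).IsAcyclic := by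
  intro v c hc
  have heven : Even c.length := (walk_parity hS c).mp rfl
  have h3l : 3 ≤ c.length := hc.three_le_length
  have h4 : 4 ≤ c.length := by
    obtain ⟨r, hr⟩ := heven; omega
  have hnodup : c.edges.Nodup := hc.edges_nodup
  have hlen : c.edges.length = c.length := Walk.length_edges c
  have hcard : c.edges.toFinset.card = c.edges.length := List.toFinset_card_of_nodup hnodup
  have hsub : ↑c.edges.toFinset ⊆ S := by
    intro e he
    rw [Finset.mem_coe, List.mem_toFinset] at he
    have := c.edges_subset_edgeSet he
    rw [edgeSet_fromEdgeSet] at this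
    exact this.1
  have := Set.ncard_le_ncard hsub (Set.toFinite S)
  rw [Set.ncard_coe_finset] at this
  omega

lemma not_acyclic_C4 (x₁ x₂ : Fin 3) (y₁ y₂ : Fin n) (hx : x₁ ≠ x₂) (hy : y₁ ≠ y₂) :
    ¬ (fromEdgeSet ({s(inl x₁, inr y₁), s(inl x₂, inr y₁), s(inl x₂, inr y₂),
        s(inl x₁, inr y₂)} : Set (Sym2 (Fin 3 ⊕ Fin n)))).IsAcyclic := by
  intro hA
  set S : Set (Sym2 (Fin 3 ⊕ Fin n)) := {s(inl x₁, inr y₁), s(inl x₂, inr y₁),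
    s(inl x₂, inr y₂), s(inl x₁, inr y₂)} with hSdef
  have h1 : (fromEdgeSet S).Adj (inl x₁) (inr y₁) := by
    rw [fromEdgeSet_adj]; exact ⟨by simp [hSdef], by simp⟩
  have h2 : (fromEdgeSet S).Adj (inr y₁) (inl x₂) := by
    rw [fromEdgeSet_adj]
    refine ⟨?_, by simp⟩
    rw [Sym2.eq_swap]; simp [hSdef]
  have h3 : (fromEdgeSet S).Adj (inl x₂) (inr y₂) := by
    rw [fromEdgeSet_adj]; exact ⟨by simp [hSdef], by simp⟩
  have h4 : (fromEdgeSet S).Adj (inr y₂) (inl x₁) := by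
    rw [fromEdgeSet_adj]
    refine ⟨?_, by simp⟩
    rw [Sym2.eq_swap]; simp [hSdef]
  set w : (fromEdgeSet S).Walk (inl x₁) (inl x₁) :=
    Walk.cons h1 (Walk.cons h2 (Walk.cons h3 (Walk.cons h4 Walk.nil))) with hw
  refine hA w ?_
  rw [Walk.isCycle_def]
  refine ⟨?_, by simp [hw], ?_⟩
  · rw [Walk.isTrail_def, hw]
    simp only [Walk.edges_cons, Walk.edges_nil, List.nodup_cons, List.mem_cons,
      List.not_mem_nil, or_false, List.mem_singleton, List.nodup_nil, and_true]
    refine ⟨?_, ?_, ?_⟩ <;> simp [Sym2.eq_iff, hx, hy, hx.symm, hy.symm, Ne.symm]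
  · rw [hw]
    simp [Walk.support_cons, hx, hy, hx.symm, hy.symm, Ne.symm]

lemma edge_mem_bip (a : Fin 3) (b : Fin n) :
    s(inl a, inr b) ∈ (completeBipartiteGraph (Fin 3) (Fin n)).edgeSet := by
  rw [SimpleGraph.mem_edgeSet]; simp

variable {M : Matroid (Sym2 (Fin 3 ⊕ Fin n))}
  (hE : M.E = (completeBipartiteGraph (Fin 3) (Fin n)).edgeSet)
  (hI : ∀ I, M.Indep I ↔ I ⊆ (completeBipartiteGraph (Fin 3) (Fin n)).edgeSet ∧
      (SimpleGraph.fromEdgeSet I).IsAcyclic)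

include hI in
lemma circuit4 {X : Set (Sym2 (Fin 3 ⊕ Fin n))}
    (x₁ x₂ : Fin 3) (y₁ y₂ : Fin n) (hx : x₁ ≠ x₂) (hy : y₁ ≠ y₂)
    (hC : ({s(inl x₁, inr y₁), s(inl x₂, inr y₁), s(inl x₂, inr y₂),
        s(inl x₁, inr y₂)} : Set (Sym2 (Fin 3 ⊕ Fin n))) ⊆ X) :
    Circuit (M.restrict X) ({s(inl x₁, inr y₁), s(inl x₂, inr y₁), s(inl x₂, inr y₂),
        s(inl x₁, inr y₂)} : Set (Sym2 (Fin 3 ⊕ Fin n))) := by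
  set C : Set (Sym2 (Fin 3 ⊕ Fin n)) := {s(inl x₁, inr y₁), s(inl x₂, inr y₁),
    s(inl x₂, inr y₂), s(inl x₁, inr y₂)} with hCdef
  have hCbip : C ⊆ (completeBipartiteGraph (Fin 3) (Fin n)).edgeSet := by
    rw [hCdef]
    rintro e (rfl | rfl | rfl | rfl) <;> exact edge_mem_bip _ _
  have hC4 : C.ncard ≤ 4 := by
    rw [hCdef]
    calc (insert s(inl x₁, inr y₁) (insert s(inl x₂, inr y₁) (insert s(inl x₂, inr y₂)
        ({s(inl x₁, inr y₂)} : Set (Sym2 (Fin 3 ⊕ Fin n)))))).ncard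
        ≤ (insert s(inl x₂, inr y₁) (insert s(inl x₂, inr y₂)
            ({s(inl x₁, inr y₂)} : Set (Sym2 (Fin 3 ⊕ Fin n))))).ncard + 1 :=
          Set.ncard_insert_le _ _
      _ ≤ (insert s(inl x₂, inr y₂)
            ({s(inl x₁, inr y₂)} : Set (Sym2 (Fin 3 ⊕ Fin n)))).ncard + 1 + 1 := by
          have := Set.ncard_insert_le s(inl x₂, inr y₁)
            (insert s(inl x₂, inr y₂) ({s(inl x₁, inr y₂)} : Set (Sym2 (Fin 3 ⊕ Fin n))))
          omega
      _ ≤ 4 := by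
          have := Set.ncard_insert_le s(inl x₂, inr y₂)
            ({s(inl x₁, inr y₂)} : Set (Sym2 (Fin 3 ⊕ Fin n)))
          simp only [Set.ncard_singleton] at this ⊢
          omega
  refine ⟨by rw [Matroid.restrict_ground_eq]; exact hC, ?_, ?_⟩
  · intro h
    rw [Matroid.restrict_indep_iff] at h
    exact not_acyclic_C4 x₁ x₂ y₁ y₂ hx hy ((hI C).mp h.1).2
  · intro D hD
    have hDC : D ⊆ C := hD.subset
    have hDbip : D ⊆ (completeBipartiteGraph (Fin 3) (Fin n)).edgeSet := hDC.trans hCbip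
    have hD3 : D.ncard ≤ 3 := by
      have := Set.ncard_lt_ncard hD (Set.toFinite C)
      omega
    exact Matroid.restrict_indep_iff.mpr
      ⟨(hI D).mpr ⟨hDbip, small_acyclic hDbip hD3⟩, hDC.trans hC⟩

include hE hI in
lemma lemB : ∀ (N : Matroid (Sym2 (Fin 3 ⊕ Fin n))) (m : ℕ), DepthLE dStep N m →
    ∀ X, X ⊆ M.E → N = M.restrict X →
    ∀ T : Finset (Fin n), (∀ (a : Fin 3) (b : Fin n), b ∈ T → s(inl a, inr b) ∈ X) →
    T.card ≤ m := by
  intro N m h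
  induction h with
  | base N m hsub hm =>
      intro X hX hN T hT
      subst hN
      rw [Matroid.restrict_ground_eq] at hsub
      rcases Nat.lt_or_ge T.card 2 with h2 | h2
      · omega
      · obtain ⟨b₁, hb₁, b₂, hb₂, hne⟩ := Finset.one_lt_card.mp h2
        have heq : s(inl (0 : Fin 3), inr b₁) = s(inl (0 : Fin 3), inr b₂) :=
          hsub (hT 0 b₁ hb₁) (hT 0 b₂ hb₂)
        rw [Sym2.eq_iff] at heq
        rcases heq with ⟨-, h⟩ | ⟨h, -⟩ <;> simp_all
  | comps N m hnc hns hcomp ih =>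
      intro X hX hN T hT
      subst hN
      rcases Nat.lt_or_ge T.card 2 with h2 | h2
      · rcases Finset.eq_empty_or_nonempty T with rfl | ⟨b, hb⟩
        · simp
        · have hEne : (M.restrict X).E.Nonempty := by
            rw [Matroid.restrict_ground_eq]
            exact ⟨_, hT 0 b hb⟩
          have := one_le_of_depthLE (DepthLE.comps _ _ hnc hns hcomp) hEne
          omega
      · set ET : Set (Sym2 (Fin 3 ⊕ Fin n)) :=
          {x | ∃ a b, b ∈ T ∧ x = s(inl a, inr b)} with hET
        have hETX : ET ⊆ X := by rintro x ⟨a, b, hb, rfl⟩; exact hT a b hb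
        obtain ⟨b₀, hb₀⟩ := Finset.card_pos.mp (by omega : 0 < T.card)
        have hconnET : ∀ e ∈ ET, ∀ f ∈ ET, ConnTo (M.restrict X) e f := by
          rintro e ⟨a, b, hb, rfl⟩ f ⟨a', b', hb', rfl⟩
          by_cases hef : s(inl a, inr b) = s(inl a', inr b')
          · exact Or.inl ⟨hef, by rw [Matroid.restrict_ground_eq]; exact hT a b hb⟩
          by_cases hbb : b = b'
          · subst hbb
            have haa : a ≠ a' := by
              intro h; subst h; exact hef rfl
            obtain ⟨b'', hb''T, hb''⟩ := Finset.exists_mem_ne h2 b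
            refine Or.inr ⟨_, circuit4 hI a a' b b'' haa (Ne.symm hb'') ?_, ?_, ?_⟩
            · rintro x (rfl | rfl | rfl | rfl) <;> exact hT _ _ (by assumption)
            · left; rfl
            · right; left; rfl
          · set a₂ : Fin 3 := if a = a' then a + 1 else a' with ha₂
            have haa : a ≠ a₂ := by
              rw [ha₂]; split
              · omega
              · assumption
            refine Or.inr ⟨_, circuit4 hI a a₂ b b' haa hbb ?_, ?_, ?_⟩
            · rintro x (rfl | rfl | rfl | rfl) <;> exact hT _ _ (by assumption)
            · left; rfl
            · rw [ha₂]; split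
              · rename_i h; subst h; right; right; right; rfl
              · right; right; left; rfl
        obtain ⟨A, hA, hETA⟩ := exists_component (M.restrict X) ET
          (by rw [Matroid.restrict_ground_eq]; exact hETX)
          ⟨s(inl 0, inr b₀), 0, b₀, hb₀, rfl⟩ hconnET
        have hAX : A ⊆ X := hA.1.trans (le_of_eq Matroid.restrict_ground_eq)
        exact ih A hA A (hAX.trans hX) (Matroid.restrict_restrict_eq M hAX) T
          (fun a b hb => hETA ⟨a, b, hb, rfl⟩)
  | step N N' m hc hns hstep hne h' ih =>
      intro X hX hN T hT
      subst hN
      obtain ⟨e, heE, rfl⟩ := hstep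
      rw [Matroid.restrict_ground_eq] at heE
      have heBip : e ∈ (completeBipartiteGraph (Fin 3) (Fin n)).edgeSet := hE ▸ hX heE
      obtain ⟨a, b, hab⟩ : ∃ a b, e = s(inl a, inr b) := by
        induction e using Sym2.ind with
        | _ u v =>
            rw [SimpleGraph.mem_edgeSet] at heBip
            rcases u with a|a <;> rcases v with b|b
            · exact absurd heBip (by simp)
            · exact ⟨a, b, rfl⟩
            · exact ⟨b, a, Sym2.eq_swap⟩
            · exact absurd heBip (by simp)
      subst hab
      have hdel : del (M.restrict X) {s(inl a, inr b)} =
          M.restrict (X \ {s(inl a, inr b)}) := by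
        unfold del
        rw [Matroid.restrict_ground_eq, Matroid.restrict_restrict_eq M diff_subset]
      have hrec := ih (X \ {s(inl a, inr b)}) (diff_subset.trans hX) hdel (T.erase b) ?_
      · by_cases hbT : b ∈ T
        · have := Finset.card_erase_add_one hbT; omega
        · rw [Finset.erase_eq_of_notMem hbT] at hrec; omega
      · intro a' b' hb'
        refine ⟨hT a' b' (Finset.mem_of_mem_erase hb'), ?_⟩
        have hbne : b' ≠ b := Finset.ne_of_mem_erase hb'
        simp only [Set.mem_singleton_iff, Sym2.eq_iff]
        rintro (⟨-, h⟩ | ⟨h, -⟩) <;> simp_all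

end Aux

theorem stmt11 (n : ℕ) (hn : 1 ≤ n)
    (M : Matroid (Sym2 (Fin 3 ⊕ Fin n)))
    (hE : M.E = (completeBipartiteGraph (Fin 3) (Fin n)).edgeSet)
    (hI : ∀ I, M.Indep I ↔ I ⊆ (completeBipartiteGraph (Fin 3) (Fin n)).edgeSet ∧
        (SimpleGraph.fromEdgeSet I).IsAcyclic) :
    n ≤ dd M := by
  have hub : DepthLE dStep M (M.E.ncard + 1) := depthLE_upper _ M le_rfl
  have hdd : dd M = sInf {k | DepthLE dStep M k} := rfl
  rw [hdd]
  refine le_csInf ⟨_, hub⟩ ?_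
  intro m hm
  have := lemB hE hI M m hm M.E (subset_refl _) M.restrict_ground_eq_self.symm Finset.univ
    (fun a b _ => by rw [hE]; exact edge_mem_bip a b)
  simpa using this

end MatroidDepth
end

section
/- Let C_m denote the graph cycle of length m and M(C_m) its cycle matroid (the uniform matroid U_{m−1,m}). Then the deletion-depth satisfies dd(M(C_m)) ≤ 2 for all m ≥ 2, while the contraction-depth satisfies cd(M(C_{2^i})) ≥ i for every i ≥ 1. Hence contraction-depth is not bounded by any function of deletion-depth on the class of all matroids. -/
open Set

namespace MatroidDepth

variable {α : Type*}

section Aux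
variable {M : Matroid α}

lemma uE_nonempty (h : ∀ I, M.Indep I ↔ I ⊆ M.E ∧ I ≠ M.E) : M.E.Nonempty := by
  rw [nonempty_iff_ne_empty]
  intro hE
  have := M.empty_indep
  rw [h] at this
  exact this.2 hE.symm

lemma ubase (h : ∀ I, M.Indep I ↔ I ⊆ M.E ∧ I ≠ M.E) {B : Set α} :
    M.IsBase B ↔ ∃ x ∈ M.E, B = M.E \ {x} := by
  rw [Matroid.isBase_iff_maximal_indep]
  constructor
  · rintro ⟨hI, hmax⟩
    obtain ⟨hBE, hne⟩ := (h B).1 hI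
    obtain ⟨x, hxE, hxB⟩ : ∃ x ∈ M.E, x ∉ B := by
      by_contra hc
      push_neg at hc
      exact hne (hBE.antisymm hc)
    refine ⟨x, hxE, ?_⟩
    have hind : M.Indep (M.E \ {x}) := (h _).2 ⟨diff_subset, fun he => by
      have : x ∈ M.E \ {x} := he.symm ▸ hxE
      exact this.2 rfl⟩
    have hsub : B ⊆ M.E \ {x} := subset_diff_singleton hBE hxB
    exact hsub.antisymm (hmax hind hsub)
  · rintro ⟨x, hxE, rfl⟩
    refine ⟨(h _).2 ⟨diff_subset, fun he => by
      have : x ∈ M.E \ {x} := he.symm ▸ hxE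
      exact this.2 rfl⟩, ?_⟩
    intro J hJ hBJ
    obtain ⟨hJE, hne⟩ := (h J).1 hJ
    have hxJ : x ∉ J := by
      intro hxJ
      apply hne
      apply hJE.antisymm
      intro y hy
      rcases eq_or_ne y x with rfl | hyx
      · exact hxJ
      · exact hBJ ⟨hy, hyx⟩
    exact subset_diff_singleton hJE hxJ

lemma udual (h : ∀ I, M.Indep I ↔ I ⊆ M.E ∧ I ≠ M.E) {I : Set α} :
    M✶.Indep I ↔ I ⊆ M.E ∧ ∃ x, I ⊆ {x} := by
  rw [Matroid.dual_indep_iff_exists']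
  refine and_congr_right fun hIE => ?_
  constructor
  · rintro ⟨B, hB, hdisj⟩
    obtain ⟨x, hxE, rfl⟩ := (ubase h).1 hB
    refine ⟨x, fun y hy => ?_⟩
    have := hdisj.ne_of_mem hy
    have hyE := hIE hy
    by_contra hyx
    exact (this ⟨hyE, hyx⟩) rfl
  · rintro ⟨x, hIx⟩
    by_cases hxE : x ∈ M.E
    · exact ⟨M.E \ {x}, (ubase h).2 ⟨x, hxE, rfl⟩,
        disjoint_left.2 fun a ha h2 => h2.2 (hIx ha)⟩
    · obtain ⟨y, hy⟩ := uE_nonempty h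
      have hI : I = ∅ := by
        rw [eq_empty_iff_forall_notMem]
        intro a ha
        have := hIx ha
        rw [mem_singleton_iff] at this
        exact hxE (this ▸ hIE ha)
      exact ⟨M.E \ {y}, (ubase h).2 ⟨y, hy, rfl⟩, by simp [hI]⟩

lemma ucon (h : ∀ I, M.Indep I ↔ I ⊆ M.E ∧ I ≠ M.E) {e f : α} (he : e ∈ M.E)
    (hf : f ∈ M.E) (hfe : f ≠ e) :
    (con M {e}).E = M.E \ {e} ∧
      (∀ I, (con M {e}).Indep I ↔ I ⊆ M.E \ {e} ∧ I ≠ M.E \ {e}) := by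
  set N := M✶.restrict (M.E \ {e}) with hN
  have hcon : con M {e} = N✶ := by
    simp only [con, del, Matroid.dual_ground, hN]
  have hNE : N.E = M.E \ {e} := by simp [hN]
  have hNind : ∀ I, N.Indep I ↔ I ⊆ M.E \ {e} ∧ ∃ x, I ⊆ {x} := by
    intro I
    rw [hN, Matroid.restrict_indep_iff, udual h]
    constructor
    · rintro ⟨⟨_, hx⟩, hIe⟩; exact ⟨hIe, hx⟩
    · rintro ⟨hIe, hx⟩; exact ⟨⟨hIe.trans diff_subset, hx⟩, hIe⟩
  have hNbase : ∀ B, N.IsBase B ↔ ∃ x ∈ M.E \ {e}, B = {x} := by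
    intro B
    rw [Matroid.isBase_iff_maximal_indep]
    constructor
    · rintro ⟨hI, hmax⟩
      obtain ⟨hBe, x, hBx⟩ := (hNind B).1 hI
      rcases eq_empty_or_nonempty B with rfl | ⟨y, hy⟩
      · exfalso
        have hfind : N.Indep {f} := (hNind _).2 ⟨by simp [hf, hfe], f, subset_rfl⟩
        have := hmax hfind (empty_subset _)
        simp [Set.ext_iff] at this
      · have hyx : y = x := hBx hy
        exact ⟨y, hBe hy, subset_antisymm (hyx ▸ hBx) (singleton_subset_iff.2 hy)⟩
    · rintro ⟨x, hx, rfl⟩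
      refine ⟨(hNind _).2 ⟨singleton_subset_iff.2 hx, x, subset_rfl⟩, ?_⟩
      intro J hJ hxJ
      obtain ⟨hJe, y, hJy⟩ := (hNind J).1 hJ
      have : x ∈ ({y} : Set α) := hJy (hxJ rfl)
      rw [mem_singleton_iff] at this
      exact this ▸ hJy
  constructor
  · rw [hcon, Matroid.dual_ground, hNE]
  · intro I
    rw [hcon, Matroid.dual_indep_iff_exists', hNE]
    constructor
    · rintro ⟨hIe, B, hB, hdisj⟩
      obtain ⟨x, hx, rfl⟩ := (hNbase B).1 hB
      refine ⟨hIe, fun hI => ?_⟩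
      exact (disjoint_singleton_right.1 hdisj) (hI ▸ hx)
    · rintro ⟨hIe, hne⟩
      obtain ⟨x, hx, hxI⟩ : ∃ x ∈ M.E \ {e}, x ∉ I := by
        by_contra hc
        push_neg at hc
        exact hne (hIe.antisymm hc)
      exact ⟨hIe, {x}, (hNbase _).2 ⟨x, hx, rfl⟩, disjoint_singleton_right.2 hxI⟩


lemma ucircuit (h : ∀ I, M.Indep I ↔ I ⊆ M.E ∧ I ≠ M.E) : Circuit M M.E :=
  ⟨subset_rfl, fun hi => ((h _).1 hi).2 rfl, fun D hD => (h D).2 ⟨hD.subset, hD.ne⟩⟩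

lemma uconn (h : ∀ I, M.Indep I ↔ I ⊆ M.E ∧ I ≠ M.E) : Conn M :=
  ⟨uE_nonempty h, fun e he f hf => Or.inr ⟨M.E, ucircuit h, he, hf⟩⟩

lemma usub_card (hfin : M.E.Finite) (hs : M.E.Subsingleton) : M.E.ncard ≤ 1 := by
  rcases hs.eq_empty_or_singleton with hr | ⟨x, hr⟩ <;> rw [hr] <;> simp

lemma ulower {M : Matroid α} {d : ℕ} (hdep : DepthLE cStep M d) :
    M.E.Finite → (∀ I, M.Indep I ↔ I ⊆ M.E ∧ I ≠ M.E) → M.E.ncard ≤ d + 1 := by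
  induction hdep with
  | base M n hsub hn =>
    intro hfin h
    have := usub_card hfin hsub
    omega
  | comps M n hnc _ _ _ =>
    intro hfin h
    exact absurd (uconn h) hnc
  | step M M' n hconn hns hstep hne hdep ih =>
    intro hfin h
    obtain ⟨e, he, rfl⟩ := hstep
    rw [Set.not_subsingleton_iff] at hns
    obtain ⟨a, ha, b, hb, hab⟩ := hns
    obtain ⟨f, hf, hfe⟩ : ∃ f ∈ M.E, f ≠ e := by
      rcases eq_or_ne a e with rfl | hae
      · exact ⟨b, hb, hab.symm⟩
      · exact ⟨a, ha, hae⟩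
    obtain ⟨hE', hind'⟩ := ucon h he hf hfe
    have hfin' : (con M {e}).E.Finite := by rw [hE']; exact hfin.diff
    have hunif' : ∀ I, (con M {e}).Indep I ↔ I ⊆ (con M {e}).E ∧ I ≠ (con M {e}).E := by
      simp only [hE']; exact hind'
    have hle := ih hfin' hunif'
    rw [hE'] at hle
    have hcard : (M.E \ {e}).ncard + 1 = M.E.ncard :=
      Set.ncard_diff_singleton_add_one he hfin
    omega

lemma uupper : ∀ (n : ℕ) (M : Matroid α), M.E.Finite → M.E.ncard = n →
    (∀ I, M.Indep I ↔ I ⊆ M.E ∧ I ≠ M.E) → DepthLE cStep M n := by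
  intro n
  induction n using Nat.strong_induction_on with
  | _ n ih =>
    intro M hfin hcard h
    by_cases hsub : M.E.Subsingleton
    · refine DepthLE.base M n hsub ?_
      have := (Set.ncard_pos hfin).2 (uE_nonempty h)
      omega
    · have hnt := hsub
      rw [Set.not_subsingleton_iff] at hnt
      obtain ⟨a, ha, b, hb, hab⟩ := hnt
      obtain ⟨hE', hind'⟩ := ucon h ha hb hab.symm
      have hfin' : (con M {a}).E.Finite := by rw [hE']; exact hfin.diff
      have hunif' : ∀ I, (con M {a}).Indep I ↔ I ⊆ (con M {a}).E ∧ I ≠ (con M {a}).E := by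
        simp only [hE']; exact hind'
      have hcard' : (M.E \ {a}).ncard + 1 = n :=
        hcard ▸ Set.ncard_diff_singleton_add_one ha hfin
      have hd := ih (M.E \ {a}).ncard (by omega) (con M {a}) hfin' (by rw [hE']) hunif'
      have hne : con M {a} ≠ M := by
        intro heq
        have hmem : a ∈ (con M {a}).E := by rw [heq]; exact ha
        rw [hE'] at hmem
        exact hmem.2 rfl
      have hstep := DepthLE.step M (con M {a}) _ (uconn h) hsub ⟨a, ha, rfl⟩ hne hd
      rwa [hcard'] at hstep

end Aux

theorem stmt12 {α : Type*} (M : Matroid α) [M.Finite]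
    (hunif : ∀ I, M.Indep I ↔ I ⊆ M.E ∧ I ≠ M.E) :
    (2 ≤ M.E.ncard → dd M ≤ 2) ∧ (∀ i : ℕ, 1 ≤ i → M.E.ncard = 2 ^ i → i ≤ cd M) := by
  have hfin : M.E.Finite := M.ground_finite
  constructor
  · intro hcard2
    have hns : ¬ M.E.Subsingleton := fun hs => by
      have := usub_card hfin hs; omega
    obtain ⟨e, he⟩ := uE_nonempty hunif
    set M' := del M {e} with hM'
    have hE' : M'.E = M.E \ {e} := by simp [hM', del]
    have hind' : ∀ I, M'.Indep I ↔ I ⊆ M.E \ {e} := by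
      intro I
      rw [hM', del, Matroid.restrict_indep_iff]
      constructor
      · exact fun hI => hI.2
      · intro hIe
        refine ⟨(hunif I).2 ⟨hIe.trans diff_subset, fun hIE => ?_⟩, hIe⟩
        exact (hIe (hIE ▸ he)).2 rfl
    have hnoc : ∀ C, ¬ Circuit M' C := fun C hC =>
      hC.2.1 ((hind' C).2 (hE' ▸ hC.1))
    have hct : ∀ a b, ConnTo M' a b → a = b := by
      rintro a b (⟨rfl, -⟩ | ⟨C, hC, -⟩)
      · rfl
      · exact absurd hC (hnoc C)
    have h1 : DepthLE dStep M' 1 := by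
      by_cases hs' : M'.E.Subsingleton
      · exact DepthLE.base _ _ hs' le_rfl
      · refine DepthLE.comps _ _ ?_ hs' ?_
        · rintro ⟨-, hcon⟩
          rw [Set.not_subsingleton_iff] at hs'
          obtain ⟨a, ha, b, hb, hab⟩ := hs'
          exact hab (hct a b (hcon a ha b hb))
        · intro A hA
          refine DepthLE.base _ _ ?_ le_rfl
          rw [Matroid.restrict_ground_eq]
          exact fun x hx y hy => hct x y (hA.2.2.1 x hx y hy)
    have hMne : M' ≠ M := by
      intro heq
      rw [heq] at hE'
      exact (hE' ▸ he).2 rfl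
    have h2 := DepthLE.step M M' 1 (uconn hunif) hns ⟨e, he, rfl⟩ hMne h1
    exact Nat.sInf_le h2
  · intro i hi hcard
    refine le_csInf ⟨M.E.ncard, uupper _ M hfin rfl hunif⟩ ?_
    intro d hd
    have h1 := ulower hd hfin hunif
    rw [hcard] at h1
    have h2 : i < 2 ^ i := Nat.lt_two_pow_self
    have : i < d + 1 := h2.trans_le h1
    omega


end MatroidDepth
end

section
/- Let G be a 2-connected graph whose longest cycle has length ℓ. Then the tree-depth of G satisfies td(G) ≥ 1 + ⌈log₂ ℓ⌉. -/
open Set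

namespace MatroidDepth

variable {α : Type*}

/-- `G` is (isomorphic to) `K₂`. -/
def IsK2 {V : Type} (G : SimpleGraph V) : Prop :=
  Nat.card V = 2 ∧ ∀ u v : V, u ≠ v → G.Adj u v

/-- `G` is 2-connected: at least 3 vertices, connected, and no cutvertex. -/
def TwoConn {V : Type} (G : SimpleGraph V) : Prop :=
  3 ≤ Nat.card V ∧ G.Connected ∧ ∀ v : V, (G.induce ({v}ᶜ : Set V)).Connected

/-- The induced subgraph on `B` is connected, has at least two vertices,
and has no cutvertex. -/
def NoCutSet {V : Type} (G : SimpleGraph V) (B : Set V) : Prop :=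
  2 ≤ B.ncard ∧ (G.induce B).Connected ∧
    ∀ v : B, ((G.induce B).induce ({v}ᶜ : Set B)).Connected

/-- A block of `G`: a maximal connected vertex set without cutvertex. -/
def IsBlock {V : Type} (G : SimpleGraph V) (B : Set V) : Prop :=
  NoCutSet G B ∧ ∀ B', B ⊆ B' → NoCutSet G B' → B' ⊆ B

/-- `TdLE G n` : the tree-depth of `G` is at most `n`. -/
inductive TdLE : {V : Type} → SimpleGraph V → ℕ → Prop
  | single {V : Type} (G : SimpleGraph V) (n : ℕ) : Nat.card V = 1 → 1 ≤ n → TdLE G n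
  | comps {V : Type} (G : SimpleGraph V) (n : ℕ) : ¬ G.Connected → Nonempty V →
      (∀ C : G.ConnectedComponent, TdLE (G.induce C.supp) n) → TdLE G n
  | del {V : Type} (G : SimpleGraph V) (n : ℕ) (v : V) : G.Connected → 1 < Nat.card V →
      TdLE (G.induce ({v}ᶜ : Set V)) n → TdLE G (n + 1)

/-- The tree-depth of a graph. -/
noncomputable def td {V : Type} (G : SimpleGraph V) : ℕ := sInf {n | TdLE G n}


open SimpleGraph in
/-- Lift a walk whose support lies in `s` to the induced subgraph on `s`. -/
def liftWalk {V : Type} {G : SimpleGraph V} {s : Set V} :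
    ∀ {a b : V} (p : G.Walk a b), (∀ x ∈ p.support, x ∈ s) →
      ∀ (ha : a ∈ s) (hb : b ∈ s), (G.induce s).Walk ⟨a, ha⟩ ⟨b, hb⟩
  | _, _, .nil, _, _, _ => .nil
  | _, _, .cons h p, hs, ha, hb =>
      .cons (by exact h)
        (liftWalk p (fun x hx => hs x (by simp [hx])) (hs _ (by simp)) hb)

open SimpleGraph in
@[simp] lemma liftWalk_length {V : Type} {G : SimpleGraph V} {s : Set V} :
    ∀ {a b : V} (p : G.Walk a b) (hs : ∀ x ∈ p.support, x ∈ s) (ha : a ∈ s) (hb : b ∈ s),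
      (liftWalk p hs ha hb).length = p.length
  | _, _, .nil, _, _, _ => rfl
  | _, _, .cons h p, hs, ha, hb => by
      exact congrArg (· + 1) (liftWalk_length p (fun x hx => hs x (by simp [hx])) (hs _ (by simp)) hb)

open SimpleGraph in
@[simp] lemma liftWalk_support {V : Type} {G : SimpleGraph V} {s : Set V} :
    ∀ {a b : V} (p : G.Walk a b) (hs : ∀ x ∈ p.support, x ∈ s) (ha : a ∈ s) (hb : b ∈ s),
      (liftWalk p hs ha hb).support.map Subtype.val = p.support
  | _, _, .nil, _, _, _ => rfl
  | _, _, .cons h p, hs, ha, hb => by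
      exact congrArg (List.cons _) (liftWalk_support p (fun x hx => hs x (by simp [hx])) (hs _ (by simp)) hb)

open SimpleGraph in
lemma liftWalk_isPath {V : Type} {G : SimpleGraph V} {s : Set V}
    {a b : V} (p : G.Walk a b) (hs : ∀ x ∈ p.support, x ∈ s) (ha : a ∈ s) (hb : b ∈ s)
    (hp : p.IsPath) : (liftWalk p hs ha hb).IsPath := by
  rw [Walk.isPath_def]
  have := (Walk.isPath_def p).mp hp
  rw [← liftWalk_support p hs ha hb] at this
  exact this.of_map

open SimpleGraph in
/-- Bound for a path starting at the deleted vertex `v`. -/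
lemma endpoint_bound {W : Type} {H : SimpleGraph W} {v : W} {n : ℕ}
    (IH : ∀ (a b : ({v}ᶜ : Set W)) (p : (H.induce ({v}ᶜ : Set W)).Walk a b),
      p.IsPath → p.length + 2 ≤ 2 ^ n)
    {b : W} (q : H.Walk v b) (hq : q.IsPath) : q.length + 1 ≤ 2 ^ n := by
  cases q with
  | nil =>
      simpa using Nat.one_le_two_pow
  | cons h q' =>
      rw [Walk.cons_isPath_iff] at hq
      have hs : ∀ x ∈ q'.support, x ∈ ({v}ᶜ : Set W) := by
        intro x hx
        simp only [Set.mem_compl_iff, Set.mem_singleton_iff]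
        rintro rfl; exact hq.2 hx
      have hb : b ∈ ({v}ᶜ : Set W) := hs _ q'.end_mem_support
      have ha : _ ∈ ({v}ᶜ : Set W) := hs _ q'.start_mem_support
      have := IH _ _ (liftWalk q' hs ha hb) (liftWalk_isPath q' hs ha hb hq.1)
      rw [liftWalk_length] at this
      simp only [Walk.length_cons]; omega

open SimpleGraph in
lemma tdle_path_bound {W : Type} {H : SimpleGraph W} {n : ℕ} (h : TdLE H n) :
    ∀ (a b : W) (p : H.Walk a b), p.IsPath → p.length + 2 ≤ 2 ^ n := by
  classical
  induction h with
  | single G n h1 hn =>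
      intro a b p hp
      have hsub : Subsingleton _ := (Nat.card_eq_one_iff_unique.mp h1).1
      have hab : a = b := Subsingleton.elim a b
      subst hab
      have : p = Walk.nil := Walk.isPath_iff_eq_nil.mp hp
      subst this
      have h2 : (2:ℕ) ^ 1 ≤ 2 ^ n := Nat.pow_le_pow_right (by omega) hn
      simpa using h2
  | comps G n hnc hne hcomp ih =>
      intro a b p hp
      set C := G.connectedComponentMk a with hC
      have hs : ∀ x ∈ p.support, x ∈ C.supp := by
        intro x hx
        have hr : G.Reachable a x := ⟨p.takeUntil x hx⟩
        simp only [ConnectedComponent.mem_supp_iff, hC]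
        exact ConnectedComponent.sound hr.symm
      have ha := hs _ p.start_mem_support
      have hb := hs _ p.end_mem_support
      have := ih C _ _ (liftWalk p hs ha hb) (liftWalk_isPath p hs ha hb hp)
      rwa [liftWalk_length] at this
  | del G n v hconn hcard htd ih =>
      intro a b p hp
      by_cases hv : v ∈ p.support
      · have hq : (p.takeUntil v hv).IsPath := hp.takeUntil _
        have hr : (p.dropUntil v hv).IsPath := hp.dropUntil hv
        have hlen : (p.takeUntil v hv).length + (p.dropUntil v hv).length = p.length := by
          have h0 := congrArg Walk.length (p.take_spec hv)
          rwa [Walk.length_append] at h0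
        have h1 : (p.takeUntil v hv).reverse.length + 1 ≤ 2 ^ n :=
          endpoint_bound ih _ hq.reverse
        have h2 : (p.dropUntil v hv).length + 1 ≤ 2 ^ n :=
          endpoint_bound ih _ hr
        rw [Walk.length_reverse] at h1
        have hpow : (2:ℕ) ^ (n+1) = 2 ^ n + 2 ^ n := by ring
        omega
      · have hs : ∀ x ∈ p.support, x ∈ ({v}ᶜ : Set _) := by
          intro x hx
          simp only [Set.mem_compl_iff, Set.mem_singleton_iff]
          rintro rfl; exact hv hx
        have ha := hs _ p.start_mem_support
        have hb := hs _ p.end_mem_support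
        have hle := ih _ _ (liftWalk p hs ha hb) (liftWalk_isPath p hs ha hb hp)
        rw [liftWalk_length] at hle
        calc p.length + 2 ≤ 2 ^ n := hle
          _ ≤ 2 ^ (n + 1) := Nat.pow_le_pow_right (by omega) (by omega)

open SimpleGraph in
lemma tdle_mono {W : Type} {H : SimpleGraph W} {n : ℕ} (h : TdLE H n) :
    ∀ m, n ≤ m → TdLE H m := by
  induction h with
  | single G n h1 hn => exact fun m hm => .single G m h1 (by omega)
  | comps G n hnc hne hcomp ih => exact fun m hm => .comps G m hnc hne (fun C => ih C m hm)
  | del G n v hconn hcard htd ih =>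
      intro m hm
      obtain ⟨m', rfl⟩ : ∃ m', m = m' + 1 := ⟨m - 1, by omega⟩
      exact .del G m' v hconn hcard (ih m' (by omega))

open SimpleGraph in
lemma tdle_card (k : ℕ) : ∀ {W : Type} [Finite W] (H : SimpleGraph W), Nonempty W →
    Nat.card W = k → TdLE H k := by
  induction k using Nat.strong_induction_on with
  | _ k ih =>
  intro W _ H hne hcard
  have hpos : 0 < Nat.card W := Nat.card_pos
  by_cases hk1 : Nat.card W = 1
  · exact .single H k hk1 (by omega)
  · have hk2 : 2 ≤ k := by omega
    by_cases hc : H.Connected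
    · obtain ⟨v⟩ := hne
      have hsum : ({v} : Set W).ncard + (({v} : Set W)ᶜ).ncard = Nat.card W :=
        Set.ncard_add_ncard_compl _
      rw [Set.ncard_singleton] at hsum
      have hcc : Nat.card (({v}ᶜ : Set W)) = k - 1 := by
        rw [Nat.card_coe_set_eq]; omega
      have hnec : Nonempty (({v}ᶜ : Set W)) := by
        have : 0 < Nat.card (({v}ᶜ : Set W)) := by omega
        exact (Nat.card_pos_iff.mp this).1
      obtain ⟨k', rfl⟩ : ∃ k', k = k' + 1 := ⟨k - 1, by omega⟩
      have := ih k' (by omega) (H.induce ({v}ᶜ : Set W)) hnec (by omega)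
      exact .del H k' v hc (by omega) this
    · refine .comps H k hc hne (fun C => ?_)
      obtain ⟨x, hx⟩ := C.exists_rep
      have hxmem : x ∈ C.supp := by
        rw [ConnectedComponent.mem_supp_iff]; exact hx
      have hnec : Nonempty C.supp := ⟨⟨x, hxmem⟩⟩
      have hssub : C.supp ⊂ Set.univ := by
        rw [Set.ssubset_univ_iff]
        intro hU
        rw [SimpleGraph.connected_iff] at hc
        push_neg at hc
        obtain ⟨u, w, huw⟩ : ∃ u w, ¬ H.Reachable u w := by
          by_contra hcon
          push_neg at hcon
          exact (hc (fun u w => hcon u w)).false hne.some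
        have hu : u ∈ C.supp := hU ▸ Set.mem_univ u
        have hw : w ∈ C.supp := hU ▸ Set.mem_univ w
        rw [ConnectedComponent.mem_supp_iff] at hu hw
        exact huw (ConnectedComponent.exact (hu.trans hw.symm))
      have hlt : Nat.card C.supp < k := by
        rw [Nat.card_coe_set_eq]
        calc C.supp.ncard < (Set.univ : Set W).ncard :=
              Set.ncard_lt_ncard hssub Set.finite_univ
          _ = Nat.card W := Set.ncard_univ W
          _ = k := hcard
      have := ih _ hlt (H.induce C.supp) hnec rfl
      exact tdle_mono this k (by omega)

theorem stmt19 {V : Type} [Fintype V] (G : SimpleGraph V) (ℓ : ℕ)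
    (h2c : TwoConn G)
    (hex : ∃ (v : V) (c : G.Walk v v), c.IsCycle ∧ c.length = ℓ)
    (hmax : ∀ (v : V) (c : G.Walk v v), c.IsCycle → c.length ≤ ℓ) :
    1 + Nat.clog 2 ℓ ≤ td G := by
  classical
  obtain ⟨v0, c, hc, hlen⟩ := hex
  have hl3 : 3 ≤ ℓ := hlen ▸ hc.three_le_length
  obtain ⟨hcard3, hconn, -⟩ := h2c
  have hne : Nonempty V := by
    have : 0 < Nat.card V := by omega
    exact (Nat.card_pos_iff.mp this).1
  have hmem : TdLE G (Nat.card V) := tdle_card _ G hne rfl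
  refine le_csInf ⟨_, hmem⟩ ?_
  rintro m hm
  cases hm with
  | single _ _ h1 _ => omega
  | comps _ _ hnc => exact absurd hconn hnc
  | del _ n w hc' hcd htd =>
    have IH := tdle_path_bound htd
    have key : ℓ ≤ 2 ^ n := by
      by_cases hw : w ∈ c.support
      · have hdc : (c.rotate w hw).IsCycle := hc.rotate hw
        have hdl : (c.rotate w hw).length = ℓ := by
          have h0 := congrArg SimpleGraph.Walk.length (c.take_spec hw)
          rw [SimpleGraph.Walk.length_append] at h0
          rw [SimpleGraph.Walk.rotate, SimpleGraph.Walk.length_append]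
          omega
        generalize c.rotate w hw = d at hdc hdl
        cases d with
        | nil => simp at hdl; omega
        | cons had d' =>
          have hd'nodup : d'.support.Nodup := by
            have h1 := (SimpleGraph.Walk.isCycle_def _).mp hdc
            simpa using h1.2.2
          have hd'path : d'.IsPath := (SimpleGraph.Walk.isPath_def _).mpr hd'nodup
          have hb := endpoint_bound IH d'.reverse hd'path.reverse
          rw [SimpleGraph.Walk.length_reverse] at hb
          have : d'.length + 1 = ℓ := by
            simpa [SimpleGraph.Walk.length_cons] using hdl
          omega
      · cases c with
        | nil =>
            have := hc.three_le_length
            simp at this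
        | cons had c' =>
          have hc'nodup : c'.support.Nodup := by
            have h1 := (SimpleGraph.Walk.isCycle_def _).mp hc
            simpa using h1.2.2
          have hc'path : c'.IsPath := (SimpleGraph.Walk.isPath_def _).mpr hc'nodup
          have hs : ∀ x ∈ c'.support, x ∈ ({w}ᶜ : Set V) := by
            intro x hx
            simp only [Set.mem_compl_iff, Set.mem_singleton_iff]
            rintro rfl
            exact hw (by simp [SimpleGraph.Walk.support_cons, hx])
          have ha := hs _ c'.start_mem_support
          have hb := hs _ c'.end_mem_support
          have hle := IH _ _ (liftWalk c' hs ha hb) (liftWalk_isPath c' hs ha hb hc'path)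
          rw [liftWalk_length] at hle
          have : c'.length + 1 = ℓ := by
            simpa [SimpleGraph.Walk.length_cons] using hlen
          omega
    have hclog : Nat.clog 2 ℓ ≤ n := (Nat.clog_le_iff_le_pow (by norm_num)).mpr key
    omega


end MatroidDepth
end
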